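/- Let m ≥ 0. The set of matrices S ∈ M_{(m+2)×2}(K) such that there exist Q, R ∈ K^{m+1} with S·Y^1_2 = Y^{m+1}_{m+2} Q and S·Z^1_2 = Z^{m+1}_{m+2} R equals { S : S_{1,2} = 0 and S_{1,1} + S_{1,2} = Σ_{i=2}^{m+2} ε_i (S_{i,1} + S_{i,2}) }, where ε_i = +1 if i ≡ 2 or 3 (mod 4) and ε_i = −1 if i ≡ 0 or 1 (mod 4). In particular this set is a (2m+2)-dimensional subspace of M_{(m+2)×2}(K). -/

import Mathlib

/-- `Y^n_{n+i}`: the `(n+i) × n` matrix whose top `i` rows are zero and whose bottom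
`n` rows form the identity. -/
def Ymat (K : Type*) [Field K] (n i : ℕ) : Matrix (Fin (n + i)) (Fin n) K :=
  Matrix.of fun r c => if (r : ℕ) = (c : ℕ) + i then 1 else 0

/-- The matrix `Z^{m+1}_{m+2}`, determined by `(Zr)_1 = r_1 + r_2` and
`(Zr)_i = r_{i-1} + r_{i+1}` for `2 ≤ i ≤ m+2` (1-based, `r_j = 0` for `j > m+1`). -/
def Zmat2 (K : Type*) [Field K] (m : ℕ) : Matrix (Fin (m + 2)) (Fin (m + 1)) K :=
  Matrix.of fun r c =>
    if (r : ℕ) = 0 then (if (c : ℕ) = 0 ∨ (c : ℕ) = 1 then 1 else 0)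
    else (if (c : ℕ) + 1 = (r : ℕ) ∨ (c : ℕ) = (r : ℕ) + 1 then 1 else 0)

/-- `ε_i = +1` if `i ≡ 2, 3 (mod 4)` and `ε_i = -1` if `i ≡ 0, 1 (mod 4)`. -/
def eps4 (K : Type*) [Field K] (i : ℕ) : K :=
  if i % 4 = 2 ∨ i % 4 = 3 then 1 else -1

/-- `Σ_{i=2}^{m+2} ε_i (S_{i,1} + S_{i,2})` (1-based row indices). -/
def rowSum (K : Type*) [Field K] (m : ℕ) (S : Matrix (Fin (m + 2)) (Fin 2) K) : K :=
  ∑ i : Fin (m + 2), (if (i : ℕ) = 0 then 0 else eps4 K ((i : ℕ) + 1)) * (S i 0 + S i 1)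

/-- `S·Y^1_2 = Y^{m+1}_{m+2} Q` and `S·Z^1_2 = Z^{m+1}_{m+2} R` for some `Q, R ∈ K^{m+1}`. -/
def cond5 (K : Type*) [Field K] (m : ℕ) (S : Matrix (Fin (m + 2)) (Fin 2) K) : Prop :=
  ∃ Q R : Fin (m + 1) → K,
    S.mulVec ![0, 1] = (Ymat K (m + 1) 1).mulVec Q ∧
    S.mulVec ![1, 1] = (Zmat2 K m).mulVec R

/-! The condition on `S·Y` says exactly that `S_{1,2} = 0`. Column `c` of `Z` is
`e_{c-1} + e_{c+1}` for `c ≥ 2` and `e_1 + e_2` for `c = 1`, and `ε_{i+2} = -ε_i`, `ε_1 + ε_2 = 0`, so `ε`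
annihilates the range of `Z`. Deleting the first row of `Z` leaves an upper unitriangular
matrix, so every vector can be matched below the first row by some `Z R`; if moreover
`ε · v = 0`, the first coordinates agree too because `ε_1 ≠ 0`. Thus the range of `Z` is
`ε^⊥`, and the set in question is the kernel of the surjection
`S ↦ (S_{1,2}, ε · S(1,1)^T)` onto `K²`, of dimension `2(m+2) - 2`. -/

open Matrix

lemma Fin.sum_ite_val_eq {M : Type*} [AddCommMonoid M] {n k : ℕ} (hk : k < n) (f : Fin n → M) :
    ∑ r : Fin n, (if (r : ℕ) = k then f r else 0) = f ⟨k, hk⟩ := by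
  simp [← Fin.ext_iff (b := ⟨k, hk⟩)]

lemma Fin.eq_of_tail_eq_of_dotProduct_eq {R : Type*} [Ring R] [NoZeroDivisors R] {n : ℕ}
    {a u w : Fin (n + 1) → R} (ha : a 0 ≠ 0) (htail : Fin.tail u = Fin.tail w)
    (hdot : a ⬝ᵥ u = a ⬝ᵥ w) : u = w := by
  have hhead : u 0 = w 0 := by
    simp only [dotProduct, Fin.sum_univ_succ] at hdot
    have hsum : ∑ i : Fin n, a i.succ * u i.succ = ∑ i : Fin n, a i.succ * w i.succ :=
      Finset.sum_congr rfl fun i _ => congrArg _ (congrFun htail i)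
    rw [hsum, add_left_inj] at hdot
    exact mul_left_cancel₀ ha hdot
  rw [← Fin.cons_self_tail u, ← Fin.cons_self_tail w, hhead, htail]

section

variable (K : Type*) [Field K]

lemma eps4_add_two (i : ℕ) : eps4 K (i + 2) = -eps4 K i := by
  unfold eps4
  split_ifs <;> first | (exfalso; omega) | simp

-- At `c = 0` the truncated `c - 1 = 0` produces the entry `Z 0 0`.
lemma Zmat2_apply (m : ℕ) (r : Fin (m + 2)) (c : Fin (m + 1)) :
    Zmat2 K m r c = (if (r : ℕ) = c - 1 then 1 else 0) + (if (r : ℕ) = c + 1 then 1 else 0) := by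
  unfold Zmat2
  simp only [Matrix.of_apply]
  split_ifs <;> first | (exfalso; omega) | simp

/-- The vector `(ε_1, …, ε_{m+2})`, in 0-based indexing. -/
def zAnnihilator (m : ℕ) : Fin (m + 2) → K :=
  fun r => eps4 K (r + 1)

lemma zAnnihilator_vecMul_Zmat2 (m : ℕ) :
    zAnnihilator K m ᵥ* Zmat2 K m = 0 := by
  funext c
  have hc := c.isLt
  simp only [vecMul, dotProduct, Zmat2_apply, mul_add, mul_ite, mul_one, mul_zero,
    Finset.sum_add_distrib, Fin.sum_ite_val_eq (show (c : ℕ) - 1 < m + 2 by omega),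
    Fin.sum_ite_val_eq (show (c : ℕ) + 1 < m + 2 by omega), zAnnihilator, Pi.zero_apply]
  rcases Nat.eq_zero_or_pos (c : ℕ) with h | h
  · simp [h, eps4]
  · rw [Nat.sub_add_cancel h, add_assoc, eps4_add_two, add_neg_cancel]

lemma isUpperTriangular_Zmat2_submatrix_succ (m : ℕ) :
    ((Zmat2 K m).submatrix Fin.succ id).IsUpperTriangular := by
  intro i j (hij : j < i)
  simp only [submatrix_apply, id, Zmat2_apply, Fin.val_succ]
  rw [if_neg (by omega), if_neg (by omega), add_zero]

lemma det_Zmat2_submatrix_succ (m : ℕ) :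
    ((Zmat2 K m).submatrix Fin.succ id).det = 1 := by
  rw [det_of_isUpperTriangular (isUpperTriangular_Zmat2_submatrix_succ K m)]
  refine Finset.prod_eq_one fun i _ => ?_
  simp only [submatrix_apply, id_eq, Zmat2_apply, Fin.val_succ,
    ↓reduceIte, add_eq_right, ite_eq_right_iff, one_ne_zero, imp_false]
  omega

lemma exists_eq_Zmat2_mulVec_iff (m : ℕ) (v : Fin (m + 2) → K) :
    (∃ R, v = Zmat2 K m *ᵥ R) ↔ zAnnihilator K m ⬝ᵥ v = 0 := by
  constructor
  · rintro ⟨R, rfl⟩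
    rw [dotProduct_mulVec, zAnnihilator_vecMul_Zmat2, zero_dotProduct]
  · intro hv
    have hunit : IsUnit ((Zmat2 K m).submatrix Fin.succ id) := by
      rw [isUnit_iff_isUnit_det, det_Zmat2_submatrix_succ]
      exact isUnit_one
    obtain ⟨R, hR⟩ := mulVec_surjective_iff_isUnit.2 hunit (Fin.tail v)
    refine ⟨R, Fin.eq_of_tail_eq_of_dotProduct_eq (a := zAnnihilator K m) ?_ hR.symm ?_⟩
    · simp [zAnnihilator, eps4]
    · rw [hv, dotProduct_mulVec, zAnnihilator_vecMul_Zmat2, zero_dotProduct]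

lemma Ymat_one_mulVec (n : ℕ) (Q : Fin n → K) :
    Ymat K n 1 *ᵥ Q = Fin.cons 0 Q := by
  funext r
  cases r using Fin.cases with
  | zero => simp [Ymat, mulVec, dotProduct]
  | succ i => simp [Ymat, mulVec, dotProduct, Fin.val_inj]

lemma exists_eq_Ymat_one_mulVec_iff (n : ℕ) (v : Fin (n + 1) → K) :
    (∃ Q, v = Ymat K n 1 *ᵥ Q) ↔ v 0 = 0 := by
  simp only [Ymat_one_mulVec]
  refine ⟨fun ⟨Q, hQ⟩ => by simp [hQ], fun h => ⟨Fin.tail v, ?_⟩⟩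
  rw [← h, Fin.cons_self_tail]

lemma cond5_iff (m : ℕ) (S : Matrix (Fin (m + 2)) (Fin 2) K) :
    cond5 K m S ↔ S 0 1 = 0 ∧ zAnnihilator K m ⬝ᵥ (S *ᵥ ![1, 1]) = 0 := by
  simp only [cond5, exists_and_left, exists_and_right]
  rw [exists_eq_Ymat_one_mulVec_iff, exists_eq_Zmat2_mulVec_iff]
  simp [mulVec, dotProduct]

lemma zAnnihilator_dotProduct_mulVec (m : ℕ)
    (S : Matrix (Fin (m + 2)) (Fin 2) K) :
    zAnnihilator K m ⬝ᵥ (S *ᵥ ![1, 1]) = rowSum K m S - (S 0 0 + S 0 1) := by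
  have heps : eps4 K 1 = -1 := by simp [eps4]
  simp only [dotProduct, zAnnihilator, mulVec, Fin.sum_univ_two, Fin.isValue, cons_val_zero,
    mul_one, cons_val_one, cons_val_fin_one, Fin.sum_univ_succ (n := m + 1),
    Fin.coe_ofNat_eq_mod, Nat.zero_mod, zero_add, heps, neg_mul, one_mul, neg_add_rev,
    Fin.val_succ, rowSum, Fin.val_eq_zero_iff, ite_mul, zero_mul, ↓reduceIte, Fin.succ_ne_zero]
  ring

def cond5Map (m : ℕ) : Matrix (Fin (m + 2)) (Fin 2) K →ₗ[K] K × K where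
  toFun S := (S 0 1, zAnnihilator K m ⬝ᵥ (S *ᵥ ![1, 1]))
  map_add' S T := by simp [add_mulVec]
  map_smul' c S := by simp [smul_mulVec]

lemma mem_ker_cond5Map_iff (m : ℕ) (S : Matrix (Fin (m + 2)) (Fin 2) K) :
    S ∈ LinearMap.ker (cond5Map K m) ↔ cond5 K m S := by
  rw [cond5_iff, LinearMap.mem_ker, Prod.ext_iff]
  rfl

lemma cond5Map_surjective (m : ℕ) :
    Function.Surjective (cond5Map K m) := by
  rintro ⟨a, b⟩
  refine ⟨Matrix.of (Pi.single 0 ![-b - a, a]), Prod.ext (by simp [cond5Map]) ?_⟩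
  show zAnnihilator K m ⬝ᵥ _ = b
  rw [zAnnihilator_dotProduct_mulVec]
  simp [rowSum, Fin.sum_univ_succ (n := m + 1)]

lemma finrank_ker_cond5Map (m : ℕ) :
    Module.finrank K (LinearMap.ker (cond5Map K m)) = 2 * m + 2 := by
  have h := LinearMap.finrank_range_add_finrank_ker (cond5Map K m)
  rw [LinearMap.range_eq_top.2 (cond5Map_surjective K m), finrank_top] at h
  simp only [Module.finrank_prod, Module.finrank_self, Module.finrank_matrix,
    Fintype.card_fin] at h
  omega

end

theorem stmt5 (K : Type*) [Field K] (m : ℕ) :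
    (∀ S : Matrix (Fin (m + 2)) (Fin 2) K,
      cond5 K m S ↔ (S 0 1 = 0 ∧ S 0 0 + S 0 1 = rowSum K m S)) ∧
    ∃ W : Submodule K (Matrix (Fin (m + 2)) (Fin 2) K),
      (∀ S, S ∈ W ↔ cond5 K m S) ∧ Module.finrank K W = 2 * m + 2 := by
  refine ⟨fun S => ?_, LinearMap.ker (cond5Map K m), mem_ker_cond5Map_iff K m,
    finrank_ker_cond5Map K m⟩
  rw [cond5_iff, zAnnihilator_dotProduct_mulVec, sub_eq_zero, eq_comm (a := rowSum K m S)]
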